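/- Let (X, τ) be a connected involutive space whose fixed-point set X^τ is nonempty. Then every 'quaternionic' vector bundle over (X, τ) has even rank. -/

import Mathlib

open scoped ComplexConjugate
open Topology

noncomputable section

/-! ### Complex vector bundles (concrete, locally trivial) -/

/-- A (locally trivial) complex vector bundle of rank `k` over the space `X`.
The fibrewise addition and scalar multiplication are given as globally defined
operations (with junk values on pairs lying in different fibres); local
triviality via fibrewise-linear homeomorphisms over open sets forces each fibre
to be a complex vector space isomorphic to `ℂ^k`. -/
structure CplxBundle (X : Type) [TopologicalSpace X] (k : ℕ) : Type 1 where
  E : Type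
  [topE : TopologicalSpace E]
  proj : E → X
  proj_cont : Continuous proj
  add : E → E → E
  smul : ℂ → E → E
  proj_add : ∀ e f, proj e = proj f → proj (add e f) = proj e
  proj_smul : ∀ c e, proj (smul c e) = proj e
  locTriv : ∀ x : X, ∃ (U : Set X) (φ : ↥(proj ⁻¹' U) ≃ₜ ↥U × (Fin k → ℂ)),
      IsOpen U ∧ x ∈ U ∧
      (∀ e : ↥(proj ⁻¹' U), ((φ e).1 : X) = proj e.val) ∧
      (∀ e f : ↥(proj ⁻¹' U), proj e.val = proj f.val →
        ∀ hmem : add e.val f.val ∈ proj ⁻¹' U,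
          (φ ⟨add e.val f.val, hmem⟩).2 = (φ e).2 + (φ f).2) ∧
      (∀ (c : ℂ) (e : ↥(proj ⁻¹' U)), ∀ hmem : smul c e.val ∈ proj ⁻¹' U,
          (φ ⟨smul c e.val, hmem⟩).2 = c • (φ e).2)

attribute [instance] CplxBundle.topE

/-- A complex vector bundle together with an anti-linear homeomorphism `Θ` of the
total space lifting the involution `τ` of the base. -/
structure InvBundle (X : Type) [TopologicalSpace X] (τ : X → X) (k : ℕ)
    extends CplxBundle X k where
  Θ : E ≃ₜ E
  proj_Θ : ∀ e, proj (Θ e) = τ (proj e)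
  Θ_add : ∀ e f, proj e = proj f → Θ (add e f) = add (Θ e) (Θ f)
  Θ_smul : ∀ (c : ℂ) (e : E), Θ (smul c e) = smul ((starRingEnd ℂ) c) (Θ e)

/-- A "real" vector bundle over the involutive space `(X, τ)`: the structure map
`Θ` squares to the identity. -/
structure RealBundle (X : Type) [TopologicalSpace X] (τ : X → X) (k : ℕ)
    extends InvBundle X τ k where
  Θ_invol : ∀ e, Θ (Θ e) = e

/-- A "quaternionic" vector bundle over the involutive space `(X, τ)`: the structure
map `Θ` squares to fibrewise multiplication by `-1`. -/
structure QuatBundle (X : Type) [TopologicalSpace X] (τ : X → X) (k : ℕ)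
    extends InvBundle X τ k where
  Θ_sq : ∀ e, Θ (Θ e) = smul (-1) e

/-- The total space of the direct sum of two bundles: the fibre product. -/
abbrev fiberProd {X : Type} [TopologicalSpace X] {k₁ k₂ : ℕ}
    (W₁ : CplxBundle X k₁) (W₂ : CplxBundle X k₂) : Type :=
  {p : W₁.E × W₂.E // W₁.proj p.1 = W₂.proj p.2}

/-- The total space of the restriction of a bundle to a subset `A` of the base. -/
abbrev restrictTotal {X : Type} [TopologicalSpace X] {k : ℕ}
    (V : CplxBundle X k) (A : Set X) : Type :=
  {e : V.E // V.proj e ∈ A}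

/-! ### Isomorphisms of bundles with involutive structure maps -/

/-- An isomorphism of "real"/"quaternionic" vector bundles: a homeomorphism of total
spaces over the base which is fibrewise linear and intertwines the structure maps. -/
structure InvIso {X : Type} [TopologicalSpace X] {τ : X → X} {k k' : ℕ}
    (V : InvBundle X τ k) (W : InvBundle X τ k') where
  g : V.E ≃ₜ W.E
  isOver : ∀ e, W.proj (g e) = V.proj e
  map_add : ∀ e f, V.proj e = V.proj f → g (V.add e f) = W.add (g e) (g f)
  map_smul : ∀ (c : ℂ) (e : V.E), g (V.smul c e) = W.smul c (g e)
  map_Θ : ∀ e, g (V.Θ e) = W.Θ (g e)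

/-- An isomorphism `V ≅ W₁ ⊕ W₂` of "real"/"quaternionic" vector bundles. -/
structure InvSumIso {X : Type} [TopologicalSpace X] {τ : X → X} {k k₁ k₂ : ℕ}
    (V : InvBundle X τ k) (W₁ : InvBundle X τ k₁) (W₂ : InvBundle X τ k₂) where
  g : fiberProd W₁.toCplxBundle W₂.toCplxBundle ≃ₜ V.E
  isOver : ∀ p, V.proj (g p) = W₁.proj p.val.1
  map_add : ∀ p q : fiberProd W₁.toCplxBundle W₂.toCplxBundle,
    W₁.proj p.val.1 = W₁.proj q.val.1 →
    ∀ hmem : W₁.proj (W₁.add p.val.1 q.val.1) = W₂.proj (W₂.add p.val.2 q.val.2),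
      g ⟨(W₁.add p.val.1 q.val.1, W₂.add p.val.2 q.val.2), hmem⟩ = V.add (g p) (g q)
  map_smul : ∀ (c : ℂ) (p : fiberProd W₁.toCplxBundle W₂.toCplxBundle),
    ∀ hmem : W₁.proj (W₁.smul c p.val.1) = W₂.proj (W₂.smul c p.val.2),
      g ⟨(W₁.smul c p.val.1, W₂.smul c p.val.2), hmem⟩ = V.smul c (g p)
  map_Θ : ∀ p : fiberProd W₁.toCplxBundle W₂.toCplxBundle,
    ∀ hmem : W₁.proj (W₁.Θ p.val.1) = W₂.proj (W₂.Θ p.val.2),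
      g ⟨(W₁.Θ p.val.1, W₂.Θ p.val.2), hmem⟩ = V.Θ (g p)

/-- An isomorphism `V₁ ⊕ V₂ ≅ W₁ ⊕ W₂` of "real"/"quaternionic" vector bundles. -/
structure InvSum2Iso {X : Type} [TopologicalSpace X] {τ : X → X} {k₁ k₂ l₁ l₂ : ℕ}
    (V₁ : InvBundle X τ k₁) (V₂ : InvBundle X τ k₂)
    (W₁ : InvBundle X τ l₁) (W₂ : InvBundle X τ l₂) where
  g : fiberProd V₁.toCplxBundle V₂.toCplxBundle ≃ₜ fiberProd W₁.toCplxBundle W₂.toCplxBundle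
  isOver : ∀ p, W₁.proj (g p).val.1 = V₁.proj p.val.1
  map_add : ∀ p q : fiberProd V₁.toCplxBundle V₂.toCplxBundle,
    V₁.proj p.val.1 = V₁.proj q.val.1 →
    ∀ hmem : V₁.proj (V₁.add p.val.1 q.val.1) = V₂.proj (V₂.add p.val.2 q.val.2),
      (g ⟨(V₁.add p.val.1 q.val.1, V₂.add p.val.2 q.val.2), hmem⟩).val
        = (W₁.add (g p).val.1 (g q).val.1, W₂.add (g p).val.2 (g q).val.2)
  map_smul : ∀ (c : ℂ) (p : fiberProd V₁.toCplxBundle V₂.toCplxBundle),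
    ∀ hmem : V₁.proj (V₁.smul c p.val.1) = V₂.proj (V₂.smul c p.val.2),
      (g ⟨(V₁.smul c p.val.1, V₂.smul c p.val.2), hmem⟩).val
        = (W₁.smul c (g p).val.1, W₂.smul c (g p).val.2)
  map_Θ : ∀ p : fiberProd V₁.toCplxBundle V₂.toCplxBundle,
    ∀ hmem : V₁.proj (V₁.Θ p.val.1) = V₂.proj (V₂.Θ p.val.2),
      (g ⟨(V₁.Θ p.val.1, V₂.Θ p.val.2), hmem⟩).val
        = (W₁.Θ (g p).val.1, W₂.Θ (g p).val.2)

/-- An isomorphism `V|_A ≅ W|_A` between the restrictions to `A` of two bundles over `X`. -/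
structure InvIsoRestrict {X : Type} [TopologicalSpace X] {τ : X → X} {k k' : ℕ}
    (A : Set X) (V : InvBundle X τ k) (W : InvBundle X τ k') where
  g : restrictTotal V.toCplxBundle A ≃ₜ restrictTotal W.toCplxBundle A
  isOver : ∀ e, W.proj (g e).val = V.proj e.val
  map_add : ∀ e f : restrictTotal V.toCplxBundle A, V.proj e.val = V.proj f.val →
    ∀ hmem : V.proj (V.add e.val f.val) ∈ A,
      (g ⟨V.add e.val f.val, hmem⟩).val = W.add (g e).val (g f).val
  map_smul : ∀ (c : ℂ) (e : restrictTotal V.toCplxBundle A),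
    ∀ hmem : V.proj (V.smul c e.val) ∈ A,
      (g ⟨V.smul c e.val, hmem⟩).val = W.smul c (g e).val
  map_Θ : ∀ e : restrictTotal V.toCplxBundle A, ∀ hmem : V.proj (V.Θ e.val) ∈ A,
      (g ⟨V.Θ e.val, hmem⟩).val = W.Θ (g e).val

/-- An isomorphism between a bundle `W` over the subspace `↥A` and the restriction to
`A` of a bundle `V` over `X`. -/
structure InvIsoOn {X : Type} [TopologicalSpace X] {τ : X → X} {k : ℕ}
    (A : Set X) {τA : ↥A → ↥A} (W : InvBundle ↥A τA k) (V : InvBundle X τ k) where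
  g : W.E ≃ₜ restrictTotal V.toCplxBundle A
  isOver : ∀ w, V.proj (g w).val = (W.proj w : X)
  map_add : ∀ v w, W.proj v = W.proj w → (g (W.add v w)).val = V.add (g v).val (g w).val
  map_smul : ∀ (c : ℂ) (w : W.E), (g (W.smul c w)).val = V.smul c (g w).val
  map_Θ : ∀ w, (g (W.Θ w)).val = V.Θ (g w).val

/-- An isomorphism `V|_A ≅ W₁ ⊕ W₂`, where `V` is a bundle over `X` and `W₁`, `W₂`
are bundles over the subspace `↥A`. -/
structure InvSumIsoOn {X : Type} [TopologicalSpace X] {τ : X → X} {k k₁ k₂ : ℕ}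
    (V : InvBundle X τ k) (A : Set X) {τA : ↥A → ↥A}
    (W₁ : InvBundle ↥A τA k₁) (W₂ : InvBundle ↥A τA k₂) where
  g : fiberProd W₁.toCplxBundle W₂.toCplxBundle ≃ₜ restrictTotal V.toCplxBundle A
  isOver : ∀ p, V.proj (g p).val = (W₁.proj p.val.1 : X)
  map_add : ∀ p q : fiberProd W₁.toCplxBundle W₂.toCplxBundle,
    W₁.proj p.val.1 = W₁.proj q.val.1 →
    ∀ hmem : W₁.proj (W₁.add p.val.1 q.val.1) = W₂.proj (W₂.add p.val.2 q.val.2),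
      (g ⟨(W₁.add p.val.1 q.val.1, W₂.add p.val.2 q.val.2), hmem⟩).val
        = V.add (g p).val (g q).val
  map_smul : ∀ (c : ℂ) (p : fiberProd W₁.toCplxBundle W₂.toCplxBundle),
    ∀ hmem : W₁.proj (W₁.smul c p.val.1) = W₂.proj (W₂.smul c p.val.2),
      (g ⟨(W₁.smul c p.val.1, W₂.smul c p.val.2), hmem⟩).val = V.smul c (g p).val
  map_Θ : ∀ p : fiberProd W₁.toCplxBundle W₂.toCplxBundle,
    ∀ hmem : W₁.proj (W₁.Θ p.val.1) = W₂.proj (W₂.Θ p.val.2),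
      (g ⟨(W₁.Θ p.val.1, W₂.Θ p.val.2), hmem⟩).val = V.Θ (g p).val

/-! ### Trivial bundles -/

/-- The local trivialization (over `Set.univ`) of a product bundle. -/
def trivialLocHomeo (X : Type) [TopologicalSpace X] (F : Type) [TopologicalSpace F] :
    ↥((Prod.fst : X × F → X) ⁻¹' (Set.univ : Set X)) ≃ₜ ↥(Set.univ : Set X) × F where
  toFun e := (⟨e.val.1, trivial⟩, e.val.2)
  invFun p := ⟨(p.1.val, p.2), trivial⟩
  left_inv _ := rfl
  right_inv _ := rfl
  continuous_toFun := by
    exact ((continuous_fst.comp continuous_subtype_val).subtype_mk _).prodMk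
      (continuous_snd.comp continuous_subtype_val)
  continuous_invFun := by
    exact ((continuous_subtype_val.comp continuous_fst).prodMk continuous_snd).subtype_mk _

/-- The trivial "real" vector bundle `θ^k_X = X × ℂ^k` with `Θ(x, v) = (τ x, conj v)`. -/
def trivialReal (X : Type) [TopologicalSpace X] (τ : X → X)
    (hτc : Continuous τ) (hτ2 : ∀ x, τ (τ x) = x) (k : ℕ) : RealBundle X τ k where
  E := X × (Fin k → ℂ)
  proj := Prod.fst
  proj_cont := continuous_fst
  add e f := (e.1, e.2 + f.2)
  smul c e := (e.1, c • e.2)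
  proj_add _ _ _ := rfl
  proj_smul _ _ := rfl
  locTriv _ := ⟨Set.univ, trivialLocHomeo X (Fin k → ℂ), isOpen_univ, trivial,
    fun _ => rfl, fun _ _ _ _ => rfl, fun _ _ _ => rfl⟩
  Θ :=
    { toFun := fun e => (τ e.1, fun i => (starRingEnd ℂ) (e.2 i))
      invFun := fun e => (τ e.1, fun i => (starRingEnd ℂ) (e.2 i))
      left_inv := fun e => Prod.ext (hτ2 e.1) (funext fun i => Complex.conj_conj (e.2 i))
      right_inv := fun e => Prod.ext (hτ2 e.1) (funext fun i => Complex.conj_conj (e.2 i))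
      continuous_toFun := (hτc.comp continuous_fst).prodMk
        (continuous_pi fun i => Complex.continuous_conj.comp
          ((continuous_apply i).comp continuous_snd))
      continuous_invFun := (hτc.comp continuous_fst).prodMk
        (continuous_pi fun i => Complex.continuous_conj.comp
          ((continuous_apply i).comp continuous_snd)) }
  proj_Θ _ := rfl
  Θ_add e f _ := Prod.ext rfl (funext fun i => map_add (starRingEnd ℂ) (e.2 i) (f.2 i))
  Θ_smul c e := Prod.ext rfl (funext fun i => map_mul (starRingEnd ℂ) c (e.2 i))
  Θ_invol e := Prod.ext (hτ2 e.1) (funext fun i => Complex.conj_conj (e.2 i))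

/-- The "quaternionic" conjugation on `ℂ^{2k}`:
`(λ₁, λ₂, …) ↦ (conj λ₂, -conj λ₁, …)`. -/
def qConj (k : ℕ) (v : Fin (2 * k) → ℂ) : Fin (2 * k) → ℂ := fun i =>
  if h : i.val % 2 = 0 then
    (starRingEnd ℂ) (v ⟨i.val + 1, by have := i.isLt; omega⟩)
  else
    - (starRingEnd ℂ) (v ⟨i.val - 1, by have := i.isLt; omega⟩)

lemma qConj_qConj (k : ℕ) (v : Fin (2 * k) → ℂ) : qConj k (qConj k v) = fun i => -(v i) := by
  funext i
  rcases Nat.even_or_odd i.val with h | h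
  · have h0 : i.val % 2 = 0 := Nat.even_iff.mp h
    have h1 : ¬ ((i.val + 1) % 2 = 0) := by omega
    simp only [qConj, dif_pos h0, dif_neg h1, map_neg, Complex.conj_conj, Fin.eta]
    first
      | rfl
      | · congr 1
          exact congrArg v (Fin.ext (by omega))
  · have h0 : ¬ (i.val % 2 = 0) := by
      have := Nat.odd_iff.mp h; omega
    have h1 : (i.val - 1) % 2 = 0 := by
      have := Nat.odd_iff.mp h; omega
    simp only [qConj, dif_neg h0, dif_pos h1, map_neg, Complex.conj_conj]
    first
      | rfl
      | · congr 1
          exact congrArg v (Fin.ext (show i.val - 1 + 1 = i.val by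
            have := Nat.odd_iff.mp h; omega))

lemma qConj_add (k : ℕ) (v w : Fin (2 * k) → ℂ) :
    qConj k (v + w) = qConj k v + qConj k w := by
  funext i
  by_cases h : i.val % 2 = 0 <;> simp [qConj, h, map_add] <;> ring

lemma qConj_smul (k : ℕ) (c : ℂ) (v : Fin (2 * k) → ℂ) :
    qConj k (c • v) = (starRingEnd ℂ) c • qConj k v := by
  funext i
  by_cases h : i.val % 2 = 0 <;>
    simp [qConj, h, map_mul, mul_neg]

lemma qConj_neg (k : ℕ) (v : Fin (2 * k) → ℂ) : qConj k (-v) = -(qConj k v) := by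
  have := qConj_smul k (-1) v
  simpa [neg_one_smul] using this

lemma continuous_qConj (k : ℕ) : Continuous (qConj k) := by
  refine continuous_pi fun i => ?_
  by_cases h : i.val % 2 = 0
  · simp only [qConj, dif_pos h]
    exact Complex.continuous_conj.comp (continuous_apply _)
  · simp only [qConj, dif_neg h]
    exact (Complex.continuous_conj.comp (continuous_apply _)).neg

/-- The trivial "quaternionic" vector bundle `θ^{2k}_X = X × ℂ^{2k}` with
`Θ(x, λ₁, λ₂, …) = (τ x, conj λ₂, -conj λ₁, …)`. -/
def trivialQuat (X : Type) [TopologicalSpace X] (τ : X → X)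
    (hτc : Continuous τ) (hτ2 : ∀ x, τ (τ x) = x) (k : ℕ) : QuatBundle X τ (2 * k) where
  E := X × (Fin (2 * k) → ℂ)
  proj := Prod.fst
  proj_cont := continuous_fst
  add e f := (e.1, e.2 + f.2)
  smul c e := (e.1, c • e.2)
  proj_add _ _ _ := rfl
  proj_smul _ _ := rfl
  locTriv _ := ⟨Set.univ, trivialLocHomeo X (Fin (2 * k) → ℂ), isOpen_univ, trivial,
    fun _ => rfl, fun _ _ _ _ => rfl, fun _ _ _ => rfl⟩
  Θ :=
    { toFun := fun e => (τ e.1, qConj k e.2)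
      invFun := fun e => (τ e.1, -(qConj k e.2))
      left_inv := fun e => by
        refine Prod.ext (hτ2 e.1) ?_
        show -(qConj k (qConj k e.2)) = e.2
        rw [qConj_qConj]; funext i; simp
      right_inv := fun e => by
        refine Prod.ext (hτ2 e.1) ?_
        show qConj k (-(qConj k e.2)) = e.2
        rw [qConj_neg, qConj_qConj]; funext i; simp
      continuous_toFun := (hτc.comp continuous_fst).prodMk
        ((continuous_qConj k).comp continuous_snd)
      continuous_invFun := (hτc.comp continuous_fst).prodMk
        ((continuous_qConj k).comp continuous_snd).neg }
  proj_Θ _ := rfl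
  Θ_add e f _ := Prod.ext rfl (qConj_add k e.2 f.2)
  Θ_smul c e := Prod.ext rfl (qConj_smul k c e.2)
  Θ_sq e := by
    refine Prod.ext (hτ2 e.1) ?_
    show qConj k (qConj k e.2) = (-1 : ℂ) • e.2
    rw [qConj_qConj]; funext i; simp

/-! ### ℤ/2-CW-complexes -/

/-- A (relative) ℤ/2-CW-structure on `(X, A)` with respect to the involution `τ`:
`X` is obtained from `A` by attaching free ℤ/2-cells `D^j × ℤ/2` (whose two halves
are interchanged by `τ`) and fixed cells `D^j` (on which `τ` acts trivially).
The data is recorded via characteristic maps from closed unit disks, as usual: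
the ℤ/2-orbits of open cells partition `X \ A`, the boundary of each cell is
attached to `A` and finitely many cells of strictly smaller dimension, and `X`
carries the weak topology. -/
structure EquivCWStructure (X : Type) [TopologicalSpace X] (τ : X → X) (A : Set X) :
    Type 1 where
  cellIdx : Type
  isFree : cellIdx → Prop
  cellDim : cellIdx → ℕ
  charMap : ∀ i, EuclideanSpace ℝ (Fin (cellDim i)) → X
  charMap_cont : ∀ i, ContinuousOn (charMap i) (Metric.closedBall 0 1)
  charMap_injOn : ∀ i, Set.InjOn (charMap i) (Metric.ball 0 1)
  fixed_pointwise : ∀ i, ¬ isFree i →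
    ∀ v ∈ Metric.closedBall (0 : EuclideanSpace ℝ (Fin (cellDim i))) 1,
      τ (charMap i v) = charMap i v
  free_halves_disjoint : ∀ i, isFree i →
    Disjoint (charMap i '' Metric.ball 0 1) (τ '' (charMap i '' Metric.ball 0 1))
  cover : ∀ x : X,
    x ∉ A ↔ ∃ i, x ∈ charMap i '' Metric.ball 0 1 ∪ τ '' (charMap i '' Metric.ball 0 1)
  cells_disjoint : Pairwise fun i j => Disjoint
    (charMap i '' Metric.ball 0 1 ∪ τ '' (charMap i '' Metric.ball 0 1))
    (charMap j '' Metric.ball 0 1 ∪ τ '' (charMap j '' Metric.ball 0 1))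
  boundary : ∀ i, ∃ J : Set cellIdx, J.Finite ∧ (∀ j ∈ J, cellDim j < cellDim i) ∧
    charMap i '' Metric.sphere 0 1 ⊆
      A ∪ ⋃ j ∈ J,
        (charMap j '' Metric.closedBall 0 1 ∪ τ '' (charMap j '' Metric.closedBall 0 1))
  weak_topology : ∀ S : Set X, IsClosed S ↔
    (IsClosed {a : ↥A | (a : X) ∈ S} ∧
      ∀ i, IsClosed {v : ↥(Metric.closedBall (0 : EuclideanSpace ℝ (Fin (cellDim i))) 1) |
        charMap i v.val ∈ S})

/-! ### Real-scalar (ℝ-linear) vector bundles, for complexification statements -/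

/-- A (locally trivial) real vector bundle of rank `k` over `X`, with `ℝ`-linear fibres. -/
structure RealScalarBundle (X : Type) [TopologicalSpace X] (k : ℕ) : Type 1 where
  E : Type
  [topE : TopologicalSpace E]
  proj : E → X
  proj_cont : Continuous proj
  add : E → E → E
  smul : ℝ → E → E
  proj_add : ∀ e f, proj e = proj f → proj (add e f) = proj e
  proj_smul : ∀ c e, proj (smul c e) = proj e
  locTriv : ∀ x : X, ∃ (U : Set X) (φ : ↥(proj ⁻¹' U) ≃ₜ ↥U × (Fin k → ℝ)),
      IsOpen U ∧ x ∈ U ∧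
      (∀ e : ↥(proj ⁻¹' U), ((φ e).1 : X) = proj e.val) ∧
      (∀ e f : ↥(proj ⁻¹' U), proj e.val = proj f.val →
        ∀ hmem : add e.val f.val ∈ proj ⁻¹' U,
          (φ ⟨add e.val f.val, hmem⟩).2 = (φ e).2 + (φ f).2) ∧
      (∀ (c : ℝ) (e : ↥(proj ⁻¹' U)), ∀ hmem : smul c e.val ∈ proj ⁻¹' U,
          (φ ⟨smul c e.val, hmem⟩).2 = c • (φ e).2)

attribute [instance] RealScalarBundle.topE

/-- Fibre product (total space of the direct sum) of two real-scalar bundles. -/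
abbrev fiberProdR {X : Type} [TopologicalSpace X] {k₁ k₂ : ℕ}
    (W₁ : RealScalarBundle X k₁) (W₂ : RealScalarBundle X k₂) : Type :=
  {p : W₁.E × W₂.E // W₁.proj p.1 = W₂.proj p.2}

/-! ### Subbundles cut out by idempotent matrix families -/

/-- Entrywise complex conjugation of a vector in `ℂ^n`. -/
def conjVec (n : ℕ) (v : Fin n → ℂ) : Fin n → ℂ := fun i => (starRingEnd ℂ) (v i)

/-- The total space of the fibrewise image of an idempotent family of matrices,
i.e. of the image subbundle of the corresponding trivial bundle. -/
abbrev idemTotal {X : Type} [TopologicalSpace X] {n : ℕ}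
    (p : X → Matrix (Fin n) (Fin n) ℂ) : Type :=
  {e : X × (Fin n → ℂ) // (p e.1).mulVec e.2 = e.2}

/-- An isomorphism between the image subbundles of two idempotent matrix families,
compatible with the involutive structure maps determined by `τ` and the fibrewise
anti-linear map `ΘV`. -/
structure IdemIso {X : Type} [TopologicalSpace X] {n : ℕ} (τ : X → X)
    (ΘV : (Fin n → ℂ) → (Fin n → ℂ)) (p q : X → Matrix (Fin n) (Fin n) ℂ) where
  g : idemTotal p ≃ₜ idemTotal q
  isOver : ∀ e, (g e).val.1 = e.val.1
  map_add : ∀ (e f : idemTotal p), e.val.1 = f.val.1 →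
    ∀ hmem : (p e.val.1).mulVec (e.val.2 + f.val.2) = e.val.2 + f.val.2,
      (g ⟨(e.val.1, e.val.2 + f.val.2), hmem⟩).val.2 = (g e).val.2 + (g f).val.2
  map_smul : ∀ (c : ℂ) (e : idemTotal p),
    ∀ hmem : (p e.val.1).mulVec (c • e.val.2) = c • e.val.2,
      (g ⟨(e.val.1, c • e.val.2), hmem⟩).val.2 = c • (g e).val.2
  map_Θ : ∀ (e : idemTotal p),
    ∀ hmem : (p (τ e.val.1)).mulVec (ΘV e.val.2) = ΘV e.val.2,
      (g ⟨(τ e.val.1, ΘV e.val.2), hmem⟩).val = (τ (g e).val.1, ΘV (g e).val.2)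

/-- The block-diagonal sum of copies of `Θ₀ = [[0, -1], [1, 0]]`, as an `n × n`
complex matrix (used for even `n`). -/
def thetaMat (n : ℕ) : Matrix (Fin n) (Fin n) ℂ :=
  Matrix.of fun i j =>
    if i.val % 2 = 0 ∧ j.val = i.val + 1 then -1
    else if i.val % 2 = 1 ∧ i.val = j.val + 1 then 1 else 0

/-! ### The torus with complex conjugation -/

/-- The torus `𝕋^d = (S¹)^d ⊆ ℂ^d`. -/
abbrev Torus (d : ℕ) : Type := Fin d → ↥(Metric.sphere (0 : ℂ) 1)

/-- The involution of entrywise complex conjugation on the torus. -/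
def torusConj (d : ℕ) : Torus d → Torus d := fun z i =>
  ⟨(starRingEnd ℂ) (z i).val, by
    have h := (z i).property
    simp only [Metric.mem_sphere, dist_zero_right] at h ⊢
    simpa using h⟩

end

/-- Over a connected involutive space with a `τ`-fixed point,
every "quaternionic" vector bundle has even rank. -/
theorem quat_bundle_even_rank
    {X : Type} [TopologicalSpace X] [ConnectedSpace X] (τ : X → X)
    (hτc : Continuous τ) (hτ2 : ∀ x, τ (τ x) = x) (hfix : ∃ x, τ x = x)
    (k : ℕ) (E : QuatBundle X τ k) : Even k := by
  classical
  obtain ⟨x, hx⟩ := hfix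
  obtain ⟨U, φ, hUo, hxU, hproj, hadd, hsmul⟩ := E.locTriv x
  set x' : ↥U := ⟨x, hxU⟩ with hx'
  set sec : (Fin k → ℂ) → ↥(E.proj ⁻¹' U) := fun v => φ.symm (x', v) with hsec
  have hφsec : ∀ v, φ (sec v) = (x', v) := fun v => φ.apply_symm_apply _
  have hsecproj : ∀ v, E.proj (sec v).val = x := fun v => by
    have h := hproj (sec v)
    rw [hφsec] at h
    exact h.symm
  have hθproj : ∀ e : E.E, E.proj e = x → E.proj (E.Θ e) = x := fun e he => by
    rw [E.proj_Θ, he, hx]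
  have hθmem : ∀ e : E.E, E.proj e = x → E.Θ e ∈ E.proj ⁻¹' U := fun e he => by
    have h := hθproj e he
    simp only [Set.mem_preimage, h]
    exact hxU
  set J : (Fin k → ℂ) → (Fin k → ℂ) :=
    fun v => (φ ⟨E.Θ (sec v).val, hθmem _ (hsecproj v)⟩).2 with hJ
  have hfst : ∀ e : ↥(E.proj ⁻¹' U), E.proj e.val = x → (φ e).1 = x' := fun e he =>
    Subtype.ext (by rw [hproj e, he])
  -- sec is compatible with addition
  have hprojadd : ∀ v w, E.proj (E.add (sec v).val (sec w).val) = x := fun v w => by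
    rw [E.proj_add _ _ (by rw [hsecproj, hsecproj]), hsecproj]
  have hmem_add : ∀ v w, E.add (sec v).val (sec w).val ∈ E.proj ⁻¹' U := fun v w => by
    simp only [Set.mem_preimage, hprojadd]; exact hxU
  have hsec_add : ∀ v w, (sec (v + w)).val = E.add (sec v).val (sec w).val := fun v w => by
    have hφ : φ ⟨E.add (sec v).val (sec w).val, hmem_add v w⟩ = (x', v + w) := by
      refine Prod.ext (hfst _ (hprojadd v w)) ?_
      rw [hadd (sec v) (sec w) (by rw [hsecproj, hsecproj]) (hmem_add v w), hφsec, hφsec]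
    have h := congrArg φ.symm hφ
    rw [φ.symm_apply_apply] at h
    exact congrArg Subtype.val h.symm
  -- sec is compatible with scalar multiplication
  have hprojsmul : ∀ (a : ℂ) v, E.proj (E.smul a (sec v).val) = x := fun a v => by
    rw [E.proj_smul, hsecproj]
  have hmem_smul : ∀ (a : ℂ) v, E.smul a (sec v).val ∈ E.proj ⁻¹' U := fun a v => by
    simp only [Set.mem_preimage, hprojsmul]; exact hxU
  have hsec_smul : ∀ (a : ℂ) v, (sec (a • v)).val = E.smul a (sec v).val := fun a v => by
    have hφ : φ ⟨E.smul a (sec v).val, hmem_smul a v⟩ = (x', a • v) := by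
      refine Prod.ext (hfst _ (hprojsmul a v)) ?_
      rw [hsmul a (sec v) (hmem_smul a v), hφsec]
    have h := congrArg φ.symm hφ
    rw [φ.symm_apply_apply] at h
    exact congrArg Subtype.val h.symm
  -- sec applied to J v is Θ of sec v
  have hsec_J : ∀ v, (sec (J v)).val = E.Θ (sec v).val := fun v => by
    have hφ : φ ⟨E.Θ (sec v).val, hθmem _ (hsecproj v)⟩ = (x', J v) :=
      Prod.ext (hfst _ (hθproj _ (hsecproj v))) rfl
    have h := congrArg φ.symm hφ
    rw [φ.symm_apply_apply] at h
    exact congrArg Subtype.val h.symm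
  -- J is additive
  have hJadd : ∀ v w, J (v + w) = J v + J w := fun v w => by
    have hmem' : E.add (E.Θ (sec v).val) (E.Θ (sec w).val) ∈ E.proj ⁻¹' U := by
      have : E.proj (E.add (E.Θ (sec v).val) (E.Θ (sec w).val)) = x := by
        rw [E.proj_add _ _ (by rw [hθproj _ (hsecproj v), hθproj _ (hsecproj w)]),
          hθproj _ (hsecproj v)]
      simp only [Set.mem_preimage, this]; exact hxU
    have h1 : (⟨E.Θ (sec (v + w)).val, hθmem _ (hsecproj _)⟩ : ↥(E.proj ⁻¹' U))
        = ⟨E.add (E.Θ (sec v).val) (E.Θ (sec w).val), hmem'⟩ := by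
      refine Subtype.ext ?_
      show E.Θ (sec (v + w)).val = E.add (E.Θ (sec v).val) (E.Θ (sec w).val)
      rw [hsec_add, E.Θ_add _ _ (by rw [hsecproj, hsecproj])]
    show (φ ⟨E.Θ (sec (v + w)).val, hθmem _ (hsecproj _)⟩).2 = _
    rw [h1]
    exact hadd ⟨E.Θ (sec v).val, hθmem _ (hsecproj v)⟩ ⟨E.Θ (sec w).val, hθmem _ (hsecproj w)⟩
      (by rw [hθproj _ (hsecproj v), hθproj _ (hsecproj w)]) hmem'
  -- J is conjugate-linear
  have hJsmul : ∀ (a : ℂ) v, J (a • v) = (starRingEnd ℂ) a • J v := fun a v => by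
    have hmem' : E.smul ((starRingEnd ℂ) a) (E.Θ (sec v).val) ∈ E.proj ⁻¹' U := by
      have : E.proj (E.smul ((starRingEnd ℂ) a) (E.Θ (sec v).val)) = x := by
        rw [E.proj_smul, hθproj _ (hsecproj v)]
      simp only [Set.mem_preimage, this]; exact hxU
    have h1 : (⟨E.Θ (sec (a • v)).val, hθmem _ (hsecproj _)⟩ : ↥(E.proj ⁻¹' U))
        = ⟨E.smul ((starRingEnd ℂ) a) (E.Θ (sec v).val), hmem'⟩ := by
      refine Subtype.ext ?_
      show E.Θ (sec (a • v)).val = E.smul ((starRingEnd ℂ) a) (E.Θ (sec v).val)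
      rw [hsec_smul, E.Θ_smul]
    show (φ ⟨E.Θ (sec (a • v)).val, hθmem _ (hsecproj _)⟩).2 = _
    rw [h1]
    exact hsmul ((starRingEnd ℂ) a) ⟨E.Θ (sec v).val, hθmem _ (hsecproj v)⟩ hmem'
  -- J squares to -1
  have hJJ : ∀ v, J (J v) = (-1 : ℂ) • v := fun v => by
    have hmem' : E.smul (-1 : ℂ) (sec v).val ∈ E.proj ⁻¹' U := hmem_smul (-1) v
    have h1 : (⟨E.Θ (sec (J v)).val, hθmem _ (hsecproj _)⟩ : ↥(E.proj ⁻¹' U))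
        = ⟨E.smul (-1 : ℂ) (sec v).val, hmem'⟩ := by
      refine Subtype.ext ?_
      show E.Θ (sec (J v)).val = E.smul (-1 : ℂ) (sec v).val
      rw [hsec_J, E.Θ_sq]
    show (φ ⟨E.Θ (sec (J v)).val, hθmem _ (hsecproj _)⟩).2 = _
    rw [h1, hsmul (-1 : ℂ) (sec v) hmem', hφsec]
  -- Now the linear-algebra part: build a ℂ-linear map from J
  have hconjvec_add : ∀ v w : Fin k → ℂ, conjVec k (v + w) = conjVec k v + conjVec k w :=
    fun v w => funext fun i => map_add _ _ _
  have hconjvec_cc : ∀ v : Fin k → ℂ, conjVec k (conjVec k v) = v :=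
    fun v => funext fun i => Complex.conj_conj _
  let L : (Fin k → ℂ) →ₗ[ℂ] (Fin k → ℂ) :=
    { toFun := fun v => J (conjVec k v)
      map_add' := fun v w => by
        show J (conjVec k (v + w)) = J (conjVec k v) + J (conjVec k w)
        rw [hconjvec_add, hJadd]
      map_smul' := fun a v => by
        show J (conjVec k (a • v)) = (RingHom.id ℂ) a • J (conjVec k v)
        have h : conjVec k (a • v) = (starRingEnd ℂ) a • conjVec k v :=
          funext fun i => by simp [conjVec, Pi.smul_apply, map_mul]
        rw [h, hJsmul]
        simp }
  let L₂ : (Fin k → ℂ) →ₗ[ℂ] (Fin k → ℂ) :=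
    { toFun := fun v => conjVec k (J v)
      map_add' := fun v w => by
        show conjVec k (J (v + w)) = conjVec k (J v) + conjVec k (J w)
        rw [hJadd, hconjvec_add]
      map_smul' := fun a v => by
        show conjVec k (J (a • v)) = (RingHom.id ℂ) a • conjVec k (J v)
        rw [hJsmul]
        funext i
        simp [conjVec, Pi.smul_apply, map_mul] }
  have hcomp : L ∘ₗ L₂ = (-1 : ℂ) • LinearMap.id := by
    refine LinearMap.ext fun v => ?_
    show J (conjVec k (conjVec k (J v))) = _
    rw [hconjvec_cc, hJJ]
    rfl
  have hdetcomp : LinearMap.det (L ∘ₗ L₂) = (-1 : ℂ) ^ k := by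
    rw [hcomp, LinearMap.det_smul, LinearMap.det_id, mul_one, Module.finrank_fin_fun]
  have hmat : LinearMap.toMatrix' L₂ = (LinearMap.toMatrix' L).map (starRingEnd ℂ) := by
    ext i j
    rw [Matrix.map_apply, LinearMap.toMatrix'_apply, LinearMap.toMatrix'_apply]
    have hδ : conjVec k (Pi.single j (1 : ℂ))
        = Pi.single j (1 : ℂ) := by
      funext j'
      by_cases h : j' = j <;> simp [conjVec, h]
    show conjVec k (J (Pi.single j (1 : ℂ))) i
        = (starRingEnd ℂ) (J (conjVec k (Pi.single j (1 : ℂ))) i)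
    rw [hδ]
    rfl
  have hdet2 : LinearMap.det L₂ = (starRingEnd ℂ) (LinearMap.det L) := by
    rw [← LinearMap.det_toMatrix' L₂, hmat,
      show (LinearMap.toMatrix' L).map (starRingEnd ℂ)
          = (starRingEnd ℂ).mapMatrix (LinearMap.toMatrix' L) from rfl,
      ← RingHom.map_det, LinearMap.det_toMatrix']
  rcases Nat.even_or_odd k with h | h
  · exact h
  · exfalso
    have h1 : LinearMap.det L * (starRingEnd ℂ) (LinearMap.det L) = (-1 : ℂ) ^ k := by
      rw [← hdet2, ← LinearMap.det_comp, hdetcomp]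
    rw [Complex.mul_conj, Odd.neg_one_pow h] at h1
    have h2 := congrArg Complex.re h1
    simp only [Complex.ofReal_re, Complex.neg_re, Complex.one_re] at h2
    have h3 := Complex.normSq_nonneg (LinearMap.det L)
    linarith
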